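/- arXiv:1605.03645 — 4 statements merged into one kernel-verified Lean document; each statement's English description precedes it below -/
import Mathlib

section
/- For every r > 0 and integer n ≥ 2, one has (sinh(2r))^n > 2n ∫_0^r (sinh(2u))^{n-1} du. -/
/-! Since `cosh ≥ 1`, strictly at `r > 0`, the integrand `sinh (2u)^(n-1)` is dominated by
`sinh (2u)^(n-1) * cosh (2u)`, and `2n` times the integral of the latter is exactly
`sinh (2r)^n` by the fundamental theorem of calculus. -/

open Real intervalIntegral Set

theorem hasDerivAt_sinh_two_mul_pow (n : ℕ) (x : ℝ) :
    HasDerivAt (fun u => sinh (2 * u) ^ n)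
      (2 * n * (sinh (2 * x) ^ (n - 1) * cosh (2 * x))) x := by
  have hsinh : HasDerivAt (fun u => sinh (2 * u)) (cosh (2 * x) * 2) x :=
    (hasDerivAt_sinh (2 * x)).comp x ((hasDerivAt_id' x).const_mul 2 |>.congr_deriv (mul_one 2))
  exact (hsinh.fun_pow n).congr_deriv (by ring)

theorem integral_sinh_two_mul_pow_mul_cosh {n : ℕ} (hn : n ≠ 0) (r : ℝ) :
    2 * n * ∫ u in (0:ℝ)..r, sinh (2 * u) ^ (n - 1) * cosh (2 * u) = sinh (2 * r) ^ n := by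
  rw [← integral_const_mul,
    integral_eq_sub_of_hasDerivAt (fun x _ => hasDerivAt_sinh_two_mul_pow n x)
      (Continuous.intervalIntegrable (by fun_prop) _ _)]
  simp [hn]

theorem integral_lt_integral_mul_of_one_le {f g : ℝ → ℝ} {a b : ℝ} (hab : a < b)
    (hf : ContinuousOn f (Icc a b)) (hg : ContinuousOn g (Icc a b))
    (hf0 : ∀ x ∈ Ioc a b, 0 ≤ f x) (hg1 : ∀ x ∈ Ioc a b, 1 ≤ g x)
    (hfb : 0 < f b) (hgb : 1 < g b) :
    ∫ x in a..b, f x < ∫ x in a..b, f x * g x :=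
  integral_lt_integral_of_continuousOn_of_le_of_exists_lt hab hf (hf.mul hg)
    (fun x hx => le_mul_of_one_le_right (hf0 x hx) (hg1 x hx))
    ⟨b, right_mem_Icc.2 hab.le, lt_mul_of_one_lt_right hfb hgb⟩

theorem stenzel_A_negativity_general (n : ℕ) (r : ℝ) (hr : 0 < r) :
    2 * n * ∫ u in (0:ℝ)..r, Real.sinh (2 * u) ^ (n - 1) < Real.sinh (2 * r) ^ n := by
  rcases eq_or_ne n 0 with rfl | hn
  · simp
  have hsinh : ∀ x ∈ Ioc 0 r, 0 < sinh (2 * x) := fun x hx => sinh_pos_iff.2 (by linarith [hx.1])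
  calc 2 * n * ∫ u in (0:ℝ)..r, sinh (2 * u) ^ (n - 1)
      < 2 * n * ∫ u in (0:ℝ)..r, sinh (2 * u) ^ (n - 1) * cosh (2 * u) := by
        refine mul_lt_mul_of_pos_left ?_ (by positivity)
        exact integral_lt_integral_mul_of_one_le hr (by fun_prop) (by fun_prop)
          (fun x hx => (pow_pos (hsinh x hx) _).le) (fun x _ => one_le_cosh _)
          (pow_pos (hsinh r ⟨hr, le_rfl⟩) _) (one_lt_cosh.2 (by positivity))
    _ = sinh (2 * r) ^ n := integral_sinh_two_mul_pow_mul_cosh hn r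

open intervalIntegral in
/-- For every `r > 0` and integer `n ≥ 2`,
`(sinh(2r))^n > 2 n ∫_0^r (sinh(2u))^(n-1) du`. -/
theorem stenzel_A_negativity (n : ℕ) (hn : 2 ≤ n) (r : ℝ) (hr : 0 < r) :
    2 * n * ∫ u in (0:ℝ)..r, Real.sinh (2 * u) ^ (n - 1) < Real.sinh (2 * r) ^ n :=
  stenzel_A_negativity_general n r hr
end

section
/- Suppose a, b, c are positive differentiable functions of ρ satisfying ȧ/a = -A, ḃ/b = -B, ċ/c = -(n-1)C, where A = (a²-b²-c²)/(2abc), B = (b²-a²-c²)/(2abc), C = (c²-a²-b²)/(2abc). Then Ȧ = -nBC + A(A+B+C), Ḃ = -nAC + B(A+B+C), and Ċ = -2AB + (n-1)C(A+B+C). -/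
/-!
Write `u = a/(bc)`, `v = b/(ac)`, `w = c/(ab)`. Then `u = -(B+C)`, `v = -(C+A)`, `w = -(A+B)`,
so `A = (u - v - w)/2` and cyclically. Each monomial has logarithmic derivative read off from the
system (e.g. `u̇/u = -A + B + mC` with `m = n - 1`), so `Ȧ, Ḃ, Ċ` are polynomials in `A, B, C`, and the claimed
formulas are polynomial identities.
-/

theorem HasDerivAt.div_mul_of_logDeriv {f g h : ℝ → ℝ} {p q r x : ℝ}
    (hf : HasDerivAt f (p * f x) x) (hg : HasDerivAt g (q * g x) x)
    (hh : HasDerivAt h (r * h x) x) (hgx : g x ≠ 0) (hhx : h x ≠ 0) :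
    HasDerivAt (fun t => f t / (g t * h t)) ((p - q - r) * (f x / (g x * h x))) x := by
  refine (hf.div (hg.mul hh) (mul_ne_zero hgx hhx)).congr_deriv ?_
  rw [Pi.mul_apply]
  field_simp
  ring

theorem stenzel_monomials_eq {a b c A B C : ℝ} (ha : a ≠ 0) (hb : b ≠ 0) (hc : c ≠ 0)
    (hA : A = (a ^ 2 - b ^ 2 - c ^ 2) / (2 * a * b * c))
    (hB : B = (b ^ 2 - a ^ 2 - c ^ 2) / (2 * a * b * c))
    (hC : C = (c ^ 2 - a ^ 2 - b ^ 2) / (2 * a * b * c)) :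
    a / (b * c) = -(B + C) ∧ b / (a * c) = -(C + A) ∧ c / (a * b) = -(A + B) := by
  subst hA hB hC
  refine ⟨?_, ?_, ?_⟩ <;> field_simp <;> ring

theorem stenzel_hasDerivAt {m : ℝ} {a b c A B C : ℝ → ℝ}
    (ha : ∀ ρ, a ρ ≠ 0) (hb : ∀ ρ, b ρ ≠ 0) (hc : ∀ ρ, c ρ ≠ 0)
    (hA : ∀ ρ, A ρ = (a ρ ^ 2 - b ρ ^ 2 - c ρ ^ 2) / (2 * a ρ * b ρ * c ρ))
    (hB : ∀ ρ, B ρ = (b ρ ^ 2 - a ρ ^ 2 - c ρ ^ 2) / (2 * a ρ * b ρ * c ρ))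
    (hC : ∀ ρ, C ρ = (c ρ ^ 2 - a ρ ^ 2 - b ρ ^ 2) / (2 * a ρ * b ρ * c ρ))
    (hda : ∀ ρ, HasDerivAt a (-(A ρ) * a ρ) ρ)
    (hdb : ∀ ρ, HasDerivAt b (-(B ρ) * b ρ) ρ)
    (hdc : ∀ ρ, HasDerivAt c (-m * C ρ * c ρ) ρ) (ρ : ℝ) :
    HasDerivAt A (-(m + 1) * B ρ * C ρ + A ρ * (A ρ + B ρ + C ρ)) ρ ∧
      HasDerivAt B (-(m + 1) * A ρ * C ρ + B ρ * (A ρ + B ρ + C ρ)) ρ ∧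
      HasDerivAt C (-2 * A ρ * B ρ + m * C ρ * (A ρ + B ρ + C ρ)) ρ := by
  have hmono t := stenzel_monomials_eq (ha t) (hb t) (hc t) (hA t) (hB t) (hC t)
  have du := (hda ρ).div_mul_of_logDeriv (hdb ρ) (hdc ρ) (hb ρ) (hc ρ)
  have dv := (hdb ρ).div_mul_of_logDeriv (hda ρ) (hdc ρ) (ha ρ) (hc ρ)
  have dw := (hdc ρ).div_mul_of_logDeriv (hda ρ) (hdb ρ) (ha ρ) (hb ρ)
  simp only [fun t => (hmono t).1, fun t => (hmono t).2.1, fun t => (hmono t).2.2] at du dv dw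
  refine ⟨?_, ?_, ?_⟩
  · refine ((((du.sub dv).sub dw).div_const 2).congr_deriv (by ring)).congr_of_eventuallyEq
      (.of_forall fun t => by simp only [Pi.sub_apply]; ring)
  · refine ((((dv.sub du).sub dw).div_const 2).congr_deriv (by ring)).congr_of_eventuallyEq
      (.of_forall fun t => by simp only [Pi.sub_apply]; ring)
  · refine ((((dw.sub du).sub dv).div_const 2).congr_deriv (by ring)).congr_of_eventuallyEq
      (.of_forall fun t => by simp only [Pi.sub_apply]; ring)

theorem stenzel_ABC_derivatives_general (n : ℕ) (a b c A B C : ℝ → ℝ)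
    (ha : ∀ ρ, 0 < a ρ) (hb : ∀ ρ, 0 < b ρ) (hc : ∀ ρ, 0 < c ρ)
    (hA : ∀ ρ, A ρ = (a ρ ^ 2 - b ρ ^ 2 - c ρ ^ 2) / (2 * a ρ * b ρ * c ρ))
    (hB : ∀ ρ, B ρ = (b ρ ^ 2 - a ρ ^ 2 - c ρ ^ 2) / (2 * a ρ * b ρ * c ρ))
    (hC : ∀ ρ, C ρ = (c ρ ^ 2 - a ρ ^ 2 - b ρ ^ 2) / (2 * a ρ * b ρ * c ρ))
    (hda : ∀ ρ, HasDerivAt a (-(A ρ) * a ρ) ρ)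
    (hdb : ∀ ρ, HasDerivAt b (-(B ρ) * b ρ) ρ)
    (hdc : ∀ ρ, HasDerivAt c (-((n : ℝ) - 1) * C ρ * c ρ) ρ) :
    ∀ ρ, HasDerivAt A (-(n : ℝ) * B ρ * C ρ + A ρ * (A ρ + B ρ + C ρ)) ρ ∧
      HasDerivAt B (-(n : ℝ) * A ρ * C ρ + B ρ * (A ρ + B ρ + C ρ)) ρ ∧
      HasDerivAt C (-2 * A ρ * B ρ + ((n : ℝ) - 1) * C ρ * (A ρ + B ρ + C ρ)) ρ := fun ρ => by
  simpa only [sub_add_cancel] using stenzel_hasDerivAt (fun ρ => (ha ρ).ne') (fun ρ => (hb ρ).ne')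
    (fun ρ => (hc ρ).ne') hA hB hC hda hdb hdc ρ

/-- If positive differentiable functions `a, b, c` of `ρ` satisfy the Stenzel
(Ricci-flat) system `ȧ/a = -A`, `ḃ/b = -B`, `ċ/c = -(n-1)C` with
`A = (a²-b²-c²)/(2abc)`, `B = (b²-a²-c²)/(2abc)`, `C = (c²-a²-b²)/(2abc)`, then
`Ȧ = -nBC + A(A+B+C)`, `Ḃ = -nAC + B(A+B+C)`, `Ċ = -2AB + (n-1)C(A+B+C)`. -/
theorem stenzel_ABC_derivatives (n : ℕ) (hn : 2 ≤ n) (a b c A B C : ℝ → ℝ)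
    (ha : ∀ ρ, 0 < a ρ) (hb : ∀ ρ, 0 < b ρ) (hc : ∀ ρ, 0 < c ρ)
    (hA : ∀ ρ, A ρ = (a ρ ^ 2 - b ρ ^ 2 - c ρ ^ 2) / (2 * a ρ * b ρ * c ρ))
    (hB : ∀ ρ, B ρ = (b ρ ^ 2 - a ρ ^ 2 - c ρ ^ 2) / (2 * a ρ * b ρ * c ρ))
    (hC : ∀ ρ, C ρ = (c ρ ^ 2 - a ρ ^ 2 - b ρ ^ 2) / (2 * a ρ * b ρ * c ρ))
    (hda : ∀ ρ, HasDerivAt a (-(A ρ) * a ρ) ρ)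
    (hdb : ∀ ρ, HasDerivAt b (-(B ρ) * b ρ) ρ)
    (hdc : ∀ ρ, HasDerivAt c (-((n : ℝ) - 1) * C ρ * c ρ) ρ) :
    ∀ ρ, HasDerivAt A (-(n : ℝ) * B ρ * C ρ + A ρ * (A ρ + B ρ + C ρ)) ρ ∧
      HasDerivAt B (-(n : ℝ) * A ρ * C ρ + B ρ * (A ρ + B ρ + C ρ)) ρ ∧
      HasDerivAt C (-2 * A ρ * B ρ + ((n : ℝ) - 1) * C ρ * (A ρ + B ρ + C ρ)) ρ :=
  stenzel_ABC_derivatives_general n a b c A B C ha hb hc hA hB hC hda hdb hdc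
end

section
/- With A, B, C defined from positive functions a, b, c satisfying the Stenzel system as above, one has Ḃ + Ċ = (B+C)(-A + B + (n-1)C), Ċ + Ȧ = (C+A)(-B + A + (n-1)C), and Ȧ + Ḃ = (A+B)(-(n-1)C + A + B). -/
/-!
The pairwise sums are monomials in `a, b, c`: `B + C = -a/(bc)`, `C + A = -b/(ac)` and
`A + B = -c/(ab)`. Their logarithmic derivatives are therefore sums of the logarithmic
derivatives `-A, -B, -(n-1)C` of `a, b, c`, which is what the three formulas say.
-/

theorem HasDerivAt.div_mul_of_logDeriv_s6 {f g h F : ℝ → ℝ} {α β γ x : ℝ}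
    (hF : ∀ t, F t = f t / (g t * h t)) (hf : HasDerivAt f (α * f x) x)
    (hg : HasDerivAt g (β * g x) x) (hh : HasDerivAt h (γ * h x) x)
    (hg0 : g x ≠ 0) (hh0 : h x ≠ 0) :
    HasDerivAt F (F x * (α - β - γ)) x := by
  rw [hF x, show F = fun t => f t / (g t * h t) from funext hF]
  refine (hf.div (hg.mul hh) (mul_ne_zero hg0 hh0)).congr_deriv ?_
  simp only [Pi.mul_apply]
  field_simp
  ring

theorem stenzel_ABC_sum_derivatives_general (n : ℕ) (a b c A B C : ℝ → ℝ)
    (ha : ∀ ρ, 0 < a ρ) (hb : ∀ ρ, 0 < b ρ) (hc : ∀ ρ, 0 < c ρ)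
    (hA : ∀ ρ, A ρ = (a ρ ^ 2 - b ρ ^ 2 - c ρ ^ 2) / (2 * a ρ * b ρ * c ρ))
    (hB : ∀ ρ, B ρ = (b ρ ^ 2 - a ρ ^ 2 - c ρ ^ 2) / (2 * a ρ * b ρ * c ρ))
    (hC : ∀ ρ, C ρ = (c ρ ^ 2 - a ρ ^ 2 - b ρ ^ 2) / (2 * a ρ * b ρ * c ρ))
    (hda : ∀ ρ, HasDerivAt a (-(A ρ) * a ρ) ρ)
    (hdb : ∀ ρ, HasDerivAt b (-(B ρ) * b ρ) ρ)
    (hdc : ∀ ρ, HasDerivAt c (-((n : ℝ) - 1) * C ρ * c ρ) ρ) :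
    ∀ ρ, HasDerivAt (fun t => B t + C t) ((B ρ + C ρ) * (-(A ρ) + B ρ + ((n : ℝ) - 1) * C ρ)) ρ ∧
      HasDerivAt (fun t => C t + A t) ((C ρ + A ρ) * (-(B ρ) + A ρ + ((n : ℝ) - 1) * C ρ)) ρ ∧
      HasDerivAt (fun t => A t + B t) ((A ρ + B ρ) * (-((n : ℝ) - 1) * C ρ + A ρ + B ρ)) ρ := by
  have hBC : ∀ t, B t + C t = -a t / (b t * c t) := fun t => by
    have := (ha t).ne'; have := (hb t).ne'; have := (hc t).ne'
    rw [hB, hC]; field_simp; ring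
  have hCA : ∀ t, C t + A t = -b t / (a t * c t) := fun t => by
    have := (ha t).ne'; have := (hb t).ne'; have := (hc t).ne'
    rw [hC, hA]; field_simp; ring
  have hAB : ∀ t, A t + B t = -c t / (a t * b t) := fun t => by
    have := (ha t).ne'; have := (hb t).ne'; have := (hc t).ne'
    rw [hA, hB]; field_simp; ring
  intro ρ
  refine ⟨?_, ?_, ?_⟩
  · refine (HasDerivAt.div_mul_of_logDeriv_s6 (F := fun t => B t + C t) (α := -A ρ) hBC
      ((hda ρ).neg.congr_deriv (by ring)) (hdb ρ) (hdc ρ) (hb ρ).ne' (hc ρ).ne').congr_deriv ?_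
    ring
  · refine (HasDerivAt.div_mul_of_logDeriv_s6 (F := fun t => C t + A t) (α := -B ρ) hCA
      ((hdb ρ).neg.congr_deriv (by ring)) (hda ρ) (hdc ρ) (ha ρ).ne' (hc ρ).ne').congr_deriv ?_
    ring
  · refine (HasDerivAt.div_mul_of_logDeriv_s6 (F := fun t => A t + B t) (α := -((n : ℝ) - 1) * C ρ) hAB
      ((hdc ρ).neg.congr_deriv (by ring)) (hda ρ) (hdb ρ) (ha ρ).ne' (hb ρ).ne').congr_deriv ?_
    ring

/-- With `A, B, C` defined from positive functions `a, b, c` satisfying the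
Stenzel system `ȧ/a = -A`, `ḃ/b = -B`, `ċ/c = -(n-1)C`, one has
`Ḃ + Ċ = (B+C)(-A + B + (n-1)C)`, `Ċ + Ȧ = (C+A)(-B + A + (n-1)C)`,
`Ȧ + Ḃ = (A+B)(-(n-1)C + A + B)`. -/
theorem stenzel_ABC_sum_derivatives (n : ℕ) (hn : 2 ≤ n) (a b c A B C : ℝ → ℝ)
    (ha : ∀ ρ, 0 < a ρ) (hb : ∀ ρ, 0 < b ρ) (hc : ∀ ρ, 0 < c ρ)
    (hA : ∀ ρ, A ρ = (a ρ ^ 2 - b ρ ^ 2 - c ρ ^ 2) / (2 * a ρ * b ρ * c ρ))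
    (hB : ∀ ρ, B ρ = (b ρ ^ 2 - a ρ ^ 2 - c ρ ^ 2) / (2 * a ρ * b ρ * c ρ))
    (hC : ∀ ρ, C ρ = (c ρ ^ 2 - a ρ ^ 2 - b ρ ^ 2) / (2 * a ρ * b ρ * c ρ))
    (hda : ∀ ρ, HasDerivAt a (-(A ρ) * a ρ) ρ)
    (hdb : ∀ ρ, HasDerivAt b (-(B ρ) * b ρ) ρ)
    (hdc : ∀ ρ, HasDerivAt c (-((n : ℝ) - 1) * C ρ * c ρ) ρ) :
    ∀ ρ, HasDerivAt (fun t => B t + C t) ((B ρ + C ρ) * (-(A ρ) + B ρ + ((n : ℝ) - 1) * C ρ)) ρ ∧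
      HasDerivAt (fun t => C t + A t) ((C ρ + A ρ) * (-(B ρ) + A ρ + ((n : ℝ) - 1) * C ρ)) ρ ∧
      HasDerivAt (fun t => A t + B t) ((A ρ + B ρ) * (-((n : ℝ) - 1) * C ρ + A ρ + B ρ)) ρ :=
  stenzel_ABC_sum_derivatives_general n a b c A B C ha hb hc hA hB hC hda hdb hdc
end

section
/- Let Ω = ω¹∧…∧ωⁿ where {ωʲ} is an orthonormal basis of H* (extended by zero on 𝒱) in V = H ⊕ 𝒱, and let L be the graph of a linear map H → 𝒱 with adapted bases e_j = cos θ_j u_j + sin θ_j v_j and e_{n+μ} = -sin θ_μ u_μ + cos θ_μ v_μ as above. Set 𝔰 = max_j |sin θ_j|. Then |Ω(e_{n+μ}, e_1, …, ê_i, …, e_n)| ≤ 𝔰 for all i, μ. -/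
/-!
Since `ωˡ` vanishes on `𝒱`, the `k`-th row `(ωˡ(x_k))_l` of the matrix defining `Ω(x_1, …, x_n)`
only sees the `H`-component of `x_k`, and by Bessel's inequality its length is at most the length
of that component. For `e_{n+μ}` the `H`-component is `-sin θ_μ u_μ`, of length at most `𝔰`,
and for `e_j` it is `cos θ_j u_j`, of length at most `1`. Hadamard's inequality bounds `|Ω|` by
the product of the row lengths.
-/

open scoped RealInnerProductSpace

theorem Matrix.abs_det_le_prod_norm_row {n : ℕ} (M : Matrix (Fin n) (Fin n) ℝ) :
    |M.det| ≤ ∏ k, ‖WithLp.toLp 2 (fun l => M k l)‖ := by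
  let b := EuclideanSpace.basisFun (Fin n) ℝ
  have : Fact (Module.finrank ℝ (EuclideanSpace ℝ (Fin n)) = n) := ⟨finrank_euclideanSpace_fin⟩
  have h := b.toBasis.orientation.abs_volumeForm_apply_le fun k => WithLp.toLp 2 (M k)
  rwa [b.toBasis.orientation.volumeForm_robust b rfl, Module.Basis.det_apply,
    ← Matrix.det_transpose] at h

theorem Orthonormal.norm_toLp_inner_add_le {V ι : Type*} [NormedAddCommGroup V]
    [InnerProductSpace ℝ V] [Fintype ι] {w : ι → V} (hw : Orthonormal ℝ w) (x : V) {y : V}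
    (hy : ∀ l, ⟪w l, y⟫ = 0) :
    ‖WithLp.toLp 2 (fun l => ⟪w l, x + y⟫)‖ ≤ ‖x‖ := by
  have hBessel := hw.sum_inner_products_le x (s := Finset.univ)
  rw [EuclideanSpace.norm_eq]
  simp only [inner_add_right, hy, add_zero]
  exact (Real.sqrt_le_sqrt hBessel).trans_eq (Real.sqrt_sq (norm_nonneg x))

theorem Orthonormal.norm_toLp_inner_smul_add_smul_le {V ι : Type*} [NormedAddCommGroup V]
    [InnerProductSpace ℝ V] [Fintype ι] {w : ι → V} (hw : Orthonormal ℝ w) (a b : ℝ) (x : V)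
    {y : V} (hy : ∀ l, ⟪w l, y⟫ = 0) :
    ‖WithLp.toLp 2 (fun l => ⟪w l, a • x + b • y⟫)‖ ≤ |a| * ‖x‖ := by
  rw [← Real.norm_eq_abs, ← norm_smul]
  exact hw.norm_toLp_inner_add_le _ fun l => by rw [inner_smul_right, hy, mul_zero]

theorem Finset.prod_le_of_le_of_forall_ne_le_one {ι R : Type*} [Fintype ι] [DecidableEq ι]
    [CommSemiring R] [PartialOrder R] [IsOrderedRing R] {f : ι → R} {s : R} (hf : ∀ k, 0 ≤ f k)
    (k₀ : ι) (hk₀ : f k₀ ≤ s) (h1 : ∀ k ≠ k₀, f k ≤ 1) : ∏ k, f k ≤ s := by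
  rw [← Finset.mul_prod_erase _ f (Finset.mem_univ k₀)]
  have hrest : ∏ k ∈ Finset.univ.erase k₀, f k ≤ 1 :=
    Finset.prod_le_one (fun k _ => hf k) fun k hk => h1 k (Finset.ne_of_mem_erase hk)
  exact (mul_le_of_le_one_right (hf k₀) hrest).trans hk₀

theorem wedge_estimate_first_of_linear1_general
    {V : Type*} [NormedAddCommGroup V] [InnerProductSpace ℝ V]
    (n m : ℕ) (H : Submodule ℝ V)
    (w u v : ℕ → V) (θ : ℕ → ℝ)
    -- `{w l}` is an orthonormal basis of `H`, defining the coframe `ωˡ = ⟪w l, ·⟫`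
    (hw : Orthonormal ℝ (fun l : Fin n => w l))
    (hwspan : Submodule.span ℝ (Set.range fun l : Fin n => w l) = H)
    -- `{u j}` is an orthonormal basis of `H`, `{v μ}` an orthonormal basis of `𝒱 = Hᗮ`
    (hu : Orthonormal ℝ (fun j : Fin n => u j))
    (hvspan : Submodule.span ℝ (Set.range fun μ : Fin m => v μ) = Hᗮ)
    -- conventions: `v_j := 0`, `θ_j := 0` for `j > m`; `u_μ := 0`, `θ_μ := 0` for `μ > n`
    (hvzero : ∀ j, m ≤ j → v j = 0 ∧ θ j = 0)
    (huzero : ∀ μ, n ≤ μ → u μ = 0 ∧ θ μ = 0)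
    -- the adapted bases `e_j` of `L` and `e_{n+μ}` of `L^⊥`
    (E E' : ℕ → V)
    (hE : ∀ j, E j = Real.cos (θ j) • u j + Real.sin (θ j) • v j)
    (hE' : ∀ μ, E' μ = -Real.sin (θ μ) • u μ + Real.cos (θ μ) • v μ)
    -- `Ω` evaluated on an `n`-tuple of vectors
    (Ω : (Fin n → V) → ℝ)
    (hΩ : ∀ x : Fin n → V, Ω x = Matrix.det (Matrix.of fun k l : Fin n => (inner ℝ (w l) (x k) : ℝ)))
    -- `𝔰 = max_j |sin θ_j|`
    (𝔰 : ℝ) (h𝔰 : IsGreatest (Set.range fun j : Fin n => |Real.sin (θ j)|) 𝔰) :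
    ∀ (i : Fin n) (μ : Fin m),
      |Ω (fun k : Fin n =>
        if (k : ℕ) = 0 then E' μ
        else if (k : ℕ) - 1 < (i : ℕ) then E ((k : ℕ) - 1) else E (k : ℕ))| ≤ 𝔰 := by
  intro i μ
  have hwv : ∀ (l : Fin n) (j : ℕ), ⟪w l, v j⟫ = 0 := by
    intro l j
    rcases lt_or_ge j m with hj | hj
    · have hwH : w l ∈ H := hwspan ▸ Submodule.subset_span ⟨l, rfl⟩
      have hvH : v j ∈ Hᗮ := hvspan ▸ Submodule.subset_span ⟨⟨j, hj⟩, rfl⟩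
      exact Submodule.inner_right_of_mem_orthogonal hwH hvH
    · rw [(hvzero j hj).1, inner_zero_right]
  have hu_le : ∀ j, ‖u j‖ ≤ 1 := by
    intro j
    rcases lt_or_ge j n with hj | hj
    · exact (hu.1 ⟨j, hj⟩).le
    · simp [(huzero j hj).1]
  have h𝔰_nonneg : 0 ≤ 𝔰 := (abs_nonneg _).trans (h𝔰.2 ⟨i, rfl⟩)
  have hE_le (j : ℕ) : ‖WithLp.toLp 2 (fun l : Fin n => ⟪w l, E j⟫)‖ ≤ 1 := by
    rw [hE]
    exact (hw.norm_toLp_inner_smul_add_smul_le _ _ _ (hwv · j)).trans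
      (mul_le_one₀ (Real.abs_cos_le_one _) (norm_nonneg _) (hu_le j))
  have hE'_le : ‖WithLp.toLp 2 (fun l : Fin n => ⟪w l, E' μ⟫)‖ ≤ 𝔰 := by
    rw [hE']
    refine (hw.norm_toLp_inner_smul_add_smul_le _ _ _ (hwv · μ)).trans ?_
    rcases lt_or_ge (μ : ℕ) n with hμ | hμ
    · rw [abs_neg]
      exact (mul_le_of_le_one_right (abs_nonneg _) (hu_le μ)).trans (h𝔰.2 ⟨⟨μ, hμ⟩, rfl⟩)
    · simpa [(huzero μ hμ).1] using h𝔰_nonneg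
  rw [hΩ]
  refine (Matrix.abs_det_le_prod_norm_row _).trans ?_
  simp only [Matrix.of_apply]
  refine Finset.prod_le_of_le_of_forall_ne_le_one (fun _ => norm_nonneg _) ⟨0, i.pos⟩
    (by simpa using hE'_le) fun k hk => ?_
  have hk : (k : ℕ) ≠ 0 := fun h => hk (Fin.ext h)
  simp only [if_neg hk]
  split_ifs <;> exact hE_le _

/-- Let `Ω = ω¹∧…∧ωⁿ`, where `{ωʲ}` is an orthonormal coframe of `H`
(extended by zero on `𝒱 = Hᗮ`), realized as `ωˡ(x) = ⟪w l, x⟫` for an orthonormal basis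
`{w l}` of `H`, so that `Ω(x_1, …, x_n) = det [ωˡ(x_k)]`.  Let `L` be the graph of a linear
map `H → 𝒱` with adapted bases `e_j = cos θ_j u_j + sin θ_j v_j` (of `L`) and
`e_{n+μ} = -sin θ_μ u_μ + cos θ_μ v_μ` (of `L^⊥`) as in the singular value decomposition,
and set `𝔰 = max_j |sin θ_j|`.  Then `|Ω(e_{n+μ}, e_1, …, ê_i, …, e_n)| ≤ 𝔰` for all `i, μ`
(`ê_i` meaning that `e_i` is omitted). -/
theorem wedge_estimate_first_of_linear1
    {V : Type*} [NormedAddCommGroup V] [InnerProductSpace ℝ V]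
    (n m : ℕ) (H : Submodule ℝ V)
    (w u v : ℕ → V) (θ : ℕ → ℝ)
    -- `{w l}` is an orthonormal basis of `H`, defining the coframe `ωˡ = ⟪w l, ·⟫`
    (hw : Orthonormal ℝ (fun l : Fin n => w l))
    (hwspan : Submodule.span ℝ (Set.range fun l : Fin n => w l) = H)
    -- `{u j}` is an orthonormal basis of `H`, `{v μ}` an orthonormal basis of `𝒱 = Hᗮ`
    (hu : Orthonormal ℝ (fun j : Fin n => u j))
    (huspan : Submodule.span ℝ (Set.range fun j : Fin n => u j) = H)
    (hv : Orthonormal ℝ (fun μ : Fin m => v μ))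
    (hvspan : Submodule.span ℝ (Set.range fun μ : Fin m => v μ) = Hᗮ)
    -- conventions: `v_j := 0`, `θ_j := 0` for `j > m`; `u_μ := 0`, `θ_μ := 0` for `μ > n`
    (hvzero : ∀ j, m ≤ j → v j = 0 ∧ θ j = 0)
    (huzero : ∀ μ, n ≤ μ → u μ = 0 ∧ θ μ = 0)
    -- the adapted bases `e_j` of `L` and `e_{n+μ}` of `L^⊥`
    (E E' : ℕ → V)
    (hE : ∀ j, E j = Real.cos (θ j) • u j + Real.sin (θ j) • v j)
    (hE' : ∀ μ, E' μ = -Real.sin (θ μ) • u μ + Real.cos (θ μ) • v μ)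
    -- `Ω` evaluated on an `n`-tuple of vectors
    (Ω : (Fin n → V) → ℝ)
    (hΩ : ∀ x : Fin n → V, Ω x = Matrix.det (Matrix.of fun k l : Fin n => (inner ℝ (w l) (x k) : ℝ)))
    -- `𝔰 = max_j |sin θ_j|`
    (𝔰 : ℝ) (h𝔰 : IsGreatest (Set.range fun j : Fin n => |Real.sin (θ j)|) 𝔰) :
    ∀ (i : Fin n) (μ : Fin m),
      |Ω (fun k : Fin n =>
        if (k : ℕ) = 0 then E' μ
        else if (k : ℕ) - 1 < (i : ℕ) then E ((k : ℕ) - 1) else E (k : ℕ))| ≤ 𝔰 :=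
  wedge_estimate_first_of_linear1_general n m H w u v θ hw hwspan hu hvspan hvzero huzero E E' hE
    hE' Ω hΩ 𝔰 h𝔰
end
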